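/- If G is a finite simple graph with τ(G) > 2ν(G) such that every proper subgraph G' of G satisfies τ(G') ≤ 2ν(G') (i.e., G is a minimal counterexample to Tuza's Conjecture), then G is robust. -/

import Mathlib

open SimpleGraph

variable {V : Type*}

/-- `S` is a set of pairwise edge-disjoint triangles of `G` (two triangles, viewed as
3-element vertex sets, are edge-disjoint iff they share at most one vertex). -/
def EdgeDisjointTriangles [DecidableEq V] (G : SimpleGraph V) (S : Finset (Finset V)) : Prop :=
  (∀ t ∈ S, G.IsNClique 3 t) ∧
    ∀ t₁ ∈ S, ∀ t₂ ∈ S, t₁ ≠ t₂ → (t₁ ∩ t₂).card ≤ 1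

/-- ν(G): the maximum size of a set of pairwise edge-disjoint triangles of `G`. -/
noncomputable def triNu [DecidableEq V] (G : SimpleGraph V) : ℕ :=
  sSup {n | ∃ S : Finset (Finset V), EdgeDisjointTriangles G S ∧ S.card = n}

/-- τ(G): the minimum size of an edge set `Y` such that `G - Y` is triangle-free. -/
noncomputable def triTau [DecidableEq V] (G : SimpleGraph V) : ℕ :=
  sInf {n | ∃ Y : Finset (Sym2 V), ↑Y ⊆ G.edgeSet ∧
    (G.deleteEdges ↑Y).CliqueFree 3 ∧ Y.card = n}

/-- `G` is robust: for every vertex `v`, every connected component of the subgraph induced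
by the neighborhood of `v` has at least 5 vertices. -/
def Robust (G : SimpleGraph V) : Prop :=
  ∀ (v : V) (c : (G.induce (G.neighborSet v)).ConnectedComponent), 5 ≤ c.supp.ncard

section API
variable [DecidableEq V]

lemma nuSet_nonempty (G : SimpleGraph V) :
    {n | ∃ S : Finset (Finset V), EdgeDisjointTriangles G S ∧ S.card = n}.Nonempty :=
  ⟨0, ∅, ⟨by simp, by simp⟩, rfl⟩

lemma nuSet_bdd [Fintype V] (G : SimpleGraph V) :
    BddAbove {n | ∃ S : Finset (Finset V), EdgeDisjointTriangles G S ∧ S.card = n} := by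
  classical
  refine ⟨Fintype.card (Finset V), ?_⟩
  rintro n ⟨S, _, rfl⟩
  exact Finset.card_le_univ S

lemma le_triNu [Fintype V] {G : SimpleGraph V} {S : Finset (Finset V)}
    (h : EdgeDisjointTriangles G S) : S.card ≤ triNu G :=
  le_csSup (nuSet_bdd G) ⟨S, h, rfl⟩

lemma triNu_spec [Fintype V] (G : SimpleGraph V) :
    ∃ S : Finset (Finset V), EdgeDisjointTriangles G S ∧ S.card = triNu G :=
  Nat.sSup_mem (nuSet_nonempty G) (nuSet_bdd G)

lemma tauSet_nonempty [Fintype V] (G : SimpleGraph V) :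
    {n | ∃ Y : Finset (Sym2 V), ↑Y ⊆ G.edgeSet ∧
      (G.deleteEdges ↑Y).CliqueFree 3 ∧ Y.card = n}.Nonempty := by
  classical
  refine ⟨G.edgeFinset.card, G.edgeFinset, by simp, ?_, rfl⟩
  have : G.deleteEdges ↑G.edgeFinset = ⊥ := by
    rw [coe_edgeFinset, deleteEdges_edgeSet]
    simp
  rw [this]
  intro t ht
  obtain ⟨a, b, c, hab, -, -, -⟩ := SimpleGraph.is3Clique_iff.mp ht
  exact hab

lemma triTau_le [Fintype V] {G : SimpleGraph V} {Y : Finset (Sym2 V)}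
    (h1 : ↑Y ⊆ G.edgeSet) (h2 : (G.deleteEdges ↑Y).CliqueFree 3) : triTau G ≤ Y.card :=
  Nat.sInf_le ⟨Y, h1, h2, rfl⟩

lemma triTau_spec [Fintype V] (G : SimpleGraph V) :
    ∃ Y : Finset (Sym2 V), ↑Y ⊆ G.edgeSet ∧
      (G.deleteEdges ↑Y).CliqueFree 3 ∧ Y.card = triTau G :=
  Nat.sInf_mem (tauSet_nonempty G)

end API

section ISO
variable {V W : Type*} [DecidableEq V] [DecidableEq W]

lemma triNu_le_iso [Fintype V] [Fintype W] {G : SimpleGraph V} {G' : SimpleGraph W}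
    (e : G ≃g G') : triNu G ≤ triNu G' := by
  classical
  obtain ⟨S, ⟨hcl, hint⟩, hcard⟩ := triNu_spec G
  rw [← hcard]
  let f : V ↪ W := e.toEmbedding.toEmbedding
  have hmap : ∀ t ∈ S, G'.IsNClique 3 (t.map f) := by
    intro t ht
    obtain ⟨hc, hcard⟩ := hcl t ht
    constructor
    · intro x hx y hy hxy
      simp only [Finset.coe_map, Set.mem_image, Finset.mem_coe] at hx hy
      obtain ⟨a, ha, rfl⟩ := hx
      obtain ⟨b, hb, rfl⟩ := hy
      have hab : a ≠ b := fun h => hxy (by rw [h])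
      exact e.map_adj_iff.mpr (hc ha hb hab)
    · rw [Finset.card_map]; exact hcard
  have hinj : Function.Injective (fun t : Finset V => t.map f) := by
    intro a b hab
    exact Finset.map_injective f hab
  have : EdgeDisjointTriangles G' (S.image (fun t => t.map f)) := by
    constructor
    · intro t ht
      obtain ⟨u, hu, rfl⟩ := Finset.mem_image.mp ht
      exact hmap u hu
    · intro t₁ ht₁ t₂ ht₂ hne
      obtain ⟨u₁, hu₁, rfl⟩ := Finset.mem_image.mp ht₁
      obtain ⟨u₂, hu₂, rfl⟩ := Finset.mem_image.mp ht₂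
      have hu : u₁ ≠ u₂ := fun h => hne (by rw [h])
      calc (u₁.map f ∩ u₂.map f).card = ((u₁ ∩ u₂).map f).card := by
            rw [Finset.map_inter]
        _ = (u₁ ∩ u₂).card := Finset.card_map _
        _ ≤ 1 := hint u₁ hu₁ u₂ hu₂ hu
  calc S.card = (S.image (fun t => t.map f)).card :=
        (Finset.card_image_of_injective S hinj).symm
    _ ≤ triNu G' := le_triNu this

lemma triTau_le_iso [Fintype V] [Fintype W] {G : SimpleGraph V} {G' : SimpleGraph W}
    (e : G ≃g G') : triTau G ≤ triTau G' := by
  classical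
  obtain ⟨Y, hYsub, hYfree, hYcard⟩ := triTau_spec G'
  rw [← hYcard]
  set Y' : Finset (Sym2 V) := Y.image (Sym2.map e.symm) with hY'
  have hsub : ↑Y' ⊆ G.edgeSet := by
    intro ed hed
    obtain ⟨x, hx, rfl⟩ := Finset.mem_image.mp hed
    induction x with
    | _ p q =>
      have : G'.Adj p q := hYsub hx
      have : G.Adj (e.symm p) (e.symm q) := e.symm.map_adj_iff.mpr this
      simpa using this
  have hfree : (G.deleteEdges ↑Y').CliqueFree 3 := by
    intro t ht
    obtain ⟨a, b, c, hab, hac, hbc, rfl⟩ := SimpleGraph.is3Clique_iff.mp ht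
    simp only [deleteEdges_adj] at hab hac hbc
    have key : ∀ x y : V, G.Adj x y → ¬ s(x,y) ∈ Y' → (G'.deleteEdges ↑Y).Adj (e x) (e y) := by
      intro x y hxy hmem
      rw [deleteEdges_adj]
      refine ⟨e.map_adj_iff.mpr hxy, fun hc => hmem ?_⟩
      refine Finset.mem_image.mpr ⟨s(e x, e y), hc, ?_⟩
      simp
    have : (G'.deleteEdges ↑Y).IsNClique 3 {e a, e b, e c} :=
      SimpleGraph.is3Clique_triple_iff.mpr
        ⟨key a b hab.1 hab.2, key a c hac.1 hac.2, key b c hbc.1 hbc.2⟩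
    exact hYfree _ this
  calc triTau G ≤ Y'.card := triTau_le hsub hfree
    _ ≤ Y.card := Finset.card_image_le

end ISO

section LEMA
variable {V : Type*} [DecidableEq V]

lemma lemA (G : SimpleGraph V) (T : Finset V) (hT : T.card ≤ 4) :
    ∃ (M : Finset (Sym2 V)) (X : Finset V),
      X.card ≤ M.card ∧ (∀ x ∈ X, x ∈ T) ∧
      (∀ e ∈ M, ∃ a b, a ∈ T ∧ b ∈ T ∧ G.Adj a b ∧ e = s(a,b)) ∧
      (∀ e ∈ M, ∀ f ∈ M, e ≠ f → ∀ x, x ∈ e → x ∉ f) ∧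
      (∀ a b, a ∈ T → b ∈ T → G.Adj a b → s(a,b) ∈ M ∨ a ∈ X ∨ b ∈ X) := by
  classical
  by_cases h2 : ∃ a b c d, a ∈ T ∧ b ∈ T ∧ c ∈ T ∧ d ∈ T ∧ G.Adj a b ∧ G.Adj c d ∧
      a ≠ c ∧ a ≠ d ∧ b ≠ c ∧ b ≠ d
  · obtain ⟨a, b, c, d, ha, hb, hc, hd, hab, hcd, hac, had, hbc, hbd⟩ := h2
    have hne_ab : a ≠ b := hab.ne
    have hne_cd : c ≠ d := hcd.ne
    have hsub : ({a, b, c, d} : Finset V) ⊆ T := by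
      intro x hx
      simp only [Finset.mem_insert, Finset.mem_singleton] at hx
      rcases hx with rfl | rfl | rfl | rfl <;> assumption
    have hcard4 : ({a, b, c, d} : Finset V).card = 4 := by
      rw [Finset.card_insert_of_notMem (by simp [hne_ab, hac, had]),
        Finset.card_insert_of_notMem (by simp [hbc, hbd]),
        Finset.card_insert_of_notMem (by simp [hne_cd]), Finset.card_singleton]
    have hTeq : T = {a, b, c, d} :=
      (Finset.eq_of_subset_of_card_le hsub (by omega)).symm
    have hMne : s(a, b) ≠ s(c, d) := by
      intro h
      rcases Sym2.eq_iff.mp h with ⟨h1, _⟩ | ⟨h1, _⟩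
      · exact hac h1
      · exact had h1
    refine ⟨{s(a, b), s(c, d)}, {a, b}, ?_, ?_, ?_, ?_, ?_⟩
    · have e1 : ({a, b} : Finset V).card ≤ 2 :=
        (Finset.card_insert_le _ _).trans (by simp)
      have e2 : ({s(a, b), s(c, d)} : Finset (Sym2 V)).card = 2 := by
        rw [Finset.card_insert_of_notMem (by simpa using hMne), Finset.card_singleton]
      omega
    · intro x hx
      simp only [Finset.mem_insert, Finset.mem_singleton] at hx
      rcases hx with rfl | rfl <;> assumption
    · intro e he
      simp only [Finset.mem_insert, Finset.mem_singleton] at he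
      rcases he with rfl | rfl
      · exact ⟨a, b, ha, hb, hab, rfl⟩
      · exact ⟨c, d, hc, hd, hcd, rfl⟩
    · intro e he f hf hef x hx
      simp only [Finset.mem_insert, Finset.mem_singleton] at he hf
      rcases he with rfl | rfl <;> rcases hf with rfl | rfl
      · exact absurd rfl hef
      · intro hxf
        rw [Sym2.mem_iff] at hx hxf
        rcases hx with rfl | rfl <;> rcases hxf with h | h <;> simp_all
      · intro hxf
        rw [Sym2.mem_iff] at hx hxf
        rcases hx with rfl | rfl <;> rcases hxf with h | h <;> simp_all
      · exact absurd rfl hef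
    · intro x y hx hy hxy
      by_cases hxab : x = a ∨ x = b
      · right; left; simpa using hxab
      by_cases hyab : y = a ∨ y = b
      · right; right; simpa using hyab
      push_neg at hxab hyab
      rw [hTeq] at hx hy
      simp only [Finset.mem_insert, Finset.mem_singleton] at hx hy
      left
      simp only [Finset.mem_insert, Finset.mem_singleton]
      rcases hx with rfl | rfl | rfl | rfl <;> rcases hy with rfl | rfl | rfl | rfl <;>
        first
          | (exact absurd rfl hxab.1)
          | (exact absurd rfl hxab.2)
          | (exact absurd rfl hyab.1)
          | (exact absurd rfl hyab.2)
          | (exact (G.loopless.irrefl _ hxy).elim)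
          | (right; rfl)
          | (right; exact Sym2.eq_swap)
  · push_neg at h2
    by_cases h1 : ∃ a b, a ∈ T ∧ b ∈ T ∧ G.Adj a b
    · obtain ⟨a, b, ha, hb, hab⟩ := h1
      have hmeet : ∀ x y z w, x ∈ T → y ∈ T → z ∈ T → w ∈ T → G.Adj x y → G.Adj z w →
          x = z ∨ x = w ∨ y = z ∨ y = w := by
        intro x y z w hx hy hz hw hxy hzw
        by_contra hcon
        push_neg at hcon
        exact hcon.2.2.2 (h2 x y z w hx hy hz hw hxy hzw hcon.1 hcon.2.1 hcon.2.2.1)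
      by_cases hp : ∃ p ∈ T, ∀ x y, x ∈ T → y ∈ T → G.Adj x y → p = x ∨ p = y
      · obtain ⟨p, hpT, hpall⟩ := hp
        obtain ⟨q, hq, hpq⟩ : ∃ q, q ∈ T ∧ G.Adj p q := by
          rcases hpall a b ha hb hab with rfl | rfl
          · exact ⟨b, hb, hab⟩
          · exact ⟨a, ha, hab.symm⟩
        refine ⟨{s(p, q)}, {p}, by simp, ?_, ?_, ?_, ?_⟩
        · intro x hx
          simp only [Finset.mem_singleton] at hx
          rwa [hx]
        · intro e he
          simp only [Finset.mem_singleton] at he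
          exact ⟨p, q, hpT, hq, hpq, he⟩
        · intro e he f hf hef
          simp only [Finset.mem_singleton] at he hf
          exact absurd (he.trans hf.symm) hef
        · intro x y hx hy hxy
          rcases hpall x y hx hy hxy with rfl | rfl
          · right; left; simp
          · right; right; simp
      · push_neg at hp
        obtain ⟨x₁, y₁, hx₁, hy₁, hxy₁, hne₁⟩ := hp a ha
        obtain ⟨x₂, y₂, hx₂, hy₂, hxy₂, hne₂⟩ := hp b hb
        have hax₁ : a ≠ x₁ := hne₁.1
        have hay₁ : a ≠ y₁ := hne₁.2
        have hbx₂ : b ≠ x₂ := hne₂.1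
        have hby₂ : b ≠ y₂ := hne₂.2
        have hz : ∃ z, z ∈ T ∧ G.Adj b z ∧ z ≠ a ∧ z ≠ b := by
          rcases hmeet a b x₁ y₁ ha hb hx₁ hy₁ hab hxy₁ with h | h | h | h
          · exact absurd h hax₁
          · exact absurd h hay₁
          · have hb' : G.Adj b y₁ := by rw [h]; exact hxy₁
            exact ⟨y₁, hy₁, hb', fun hh => hay₁ hh.symm, hb'.ne'⟩
          · have hb' : G.Adj b x₁ := by rw [h]; exact hxy₁.symm
            exact ⟨x₁, hx₁, hb', fun hh => hax₁ hh.symm, hb'.ne'⟩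
        have hw : ∃ w, w ∈ T ∧ G.Adj a w ∧ w ≠ a ∧ w ≠ b := by
          rcases hmeet a b x₂ y₂ ha hb hx₂ hy₂ hab hxy₂ with h | h | h | h
          · have ha' : G.Adj a y₂ := by rw [h]; exact hxy₂
            exact ⟨y₂, hy₂, ha', ha'.ne', fun hh => hby₂ hh.symm⟩
          · have ha' : G.Adj a x₂ := by rw [h]; exact hxy₂.symm
            exact ⟨x₂, hx₂, ha', ha'.ne', fun hh => hbx₂ hh.symm⟩
          · exact absurd h hbx₂
          · exact absurd h hby₂
        obtain ⟨z, hzT, hbz, hza, hzb⟩ := hz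
        obtain ⟨w, hwT, haw, hwa, hwb⟩ := hw
        have hzw : z = w := by
          rcases hmeet b z a w hb hzT ha hwT hbz haw with h | h | h | h
          · exact absurd h hab.ne'
          · exact absurd h hwb.symm
          · exact absurd h hza
          · exact h
        rw [hzw] at hbz hza hzb
        clear hzw hzT z
        refine ⟨{s(a, b)}, {w}, by simp, ?_, ?_, ?_, ?_⟩
        · intro x hx
          simp only [Finset.mem_singleton] at hx
          rwa [hx]
        · intro e he
          simp only [Finset.mem_singleton] at he
          exact ⟨a, b, ha, hb, hab, he⟩
        · intro e he f hf hef
          simp only [Finset.mem_singleton] at he hf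
          exact absurd (he.trans hf.symm) hef
        · intro x y hx hy hxy
          by_cases hxw : x = w
          · right; left; simp [hxw]
          by_cases hyw : y = w
          · right; right; simp [hyw]
          left
          simp only [Finset.mem_singleton]
          have h1' : x = a ∨ y = a := by
            rcases hmeet x y a w hx hy ha hwT hxy haw with h | h | h | h
            · exact Or.inl h
            · exact absurd h hxw
            · exact Or.inr h
            · exact absurd h hyw
          have h2' : x = b ∨ y = b := by
            rcases hmeet x y b w hx hy hb hwT hxy hbz with h | h | h | h
            · exact Or.inl h
            · exact absurd h hxw
            · exact Or.inr h
            · exact absurd h hyw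
          rcases h1' with hxa | hya
          · rcases h2' with hxb | hyb
            · exact absurd (hxa.symm.trans hxb) hab.ne
            · rw [hxa, hyb]
          · rcases h2' with hxb | hyb
            · rw [hxb, hya]; exact Sym2.eq_swap
            · exact absurd (hya.symm.trans hyb) hab.ne
    · push_neg at h1
      exact ⟨∅, ∅, le_refl 0, by simp, by simp, by simp, fun a b ha hb hadj =>
        absurd hadj (h1 a b ha hb)⟩
end LEMA

/-- A minimal counterexample to Tuza's Conjecture is robust. -/
theorem minimal_counterexample_robust [Fintype V] [DecidableEq V] (G : SimpleGraph V)
    (hG : 2 * triNu G < triTau G)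
    (hmin : ∀ H : G.Subgraph, H ≠ ⊤ → triTau H.coe ≤ 2 * triNu H.coe) :
    Robust G := by
  classical
  intro v c
  by_contra hlt
  push_neg at hlt
  -- the component's vertex set in V
  set Tset : Set V := Subtype.val '' c.supp with hTset
  have hfin : Tset.Finite := Set.toFinite _
  set T : Finset V := hfin.toFinset with hTdef
  have hmemT : ∀ x, x ∈ T ↔ x ∈ Tset := fun x => Set.Finite.mem_toFinset hfin
  have hTadj : ∀ x ∈ T, G.Adj v x := by
    intro x hx
    rw [hmemT] at hx
    obtain ⟨x', _, rfl⟩ := hx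
    exact x'.2
  have hvT : v ∉ T := fun h => G.loopless.irrefl v (hTadj v h)
  have hTcard : T.card ≤ 4 := by
    have h1 : Tset.ncard = c.supp.ncard := Set.ncard_image_of_injective _ Subtype.val_injective
    have h2 : Tset.ncard = T.card := Set.ncard_eq_toFinset_card _ hfin
    omega
  have hTne : T.Nonempty := by
    obtain ⟨u, hu⟩ := c.exists_rep
    exact ⟨u.val, (hmemT _).mpr ⟨u, hu, rfl⟩⟩
  have hclos : ∀ u ∈ T, ∀ w, G.Adj v w → G.Adj u w → w ∈ T := by
    intro u hu w hvw huw
    rw [hmemT] at hu ⊢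
    obtain ⟨u', hu', rfl⟩ := hu
    refine ⟨⟨w, hvw⟩, ?_, rfl⟩
    rw [SimpleGraph.ConnectedComponent.mem_supp_iff] at hu' ⊢
    rw [← hu']
    apply SimpleGraph.ConnectedComponent.sound
    apply SimpleGraph.Adj.reachable
    show (G.induce (G.neighborSet v)).Adj ⟨w, hvw⟩ u'
    simp only [comap_adj, Function.Embedding.coe_subtype]
    exact huw.symm
  obtain ⟨M, X, hXM, hXT, hMedge, hMdisj, hcover⟩ := lemA G T hTcard
  set Dset : Set (Sym2 V) := ↑M ∪ {e | ∃ x ∈ T, e = s(v, x)} with hD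
  have hDstar : ∀ x ∈ T, s(v, x) ∈ Dset := fun x hx => Or.inr ⟨x, hx, rfl⟩
  have hDM : ∀ e ∈ M, e ∈ Dset := fun e he => Or.inl he
  -- the proper subgraph
  let H : G.Subgraph :=
    { verts := Set.univ
      Adj := fun x y => G.Adj x y ∧ s(x, y) ∉ Dset
      adj_sub := fun h => h.1
      edge_vert := fun _ => Set.mem_univ _
      symm := by
        constructor
        intro x y h
        refine ⟨h.1.symm, ?_⟩
        rw [Sym2.eq_swap]
        exact h.2 }
  obtain ⟨t0, ht0⟩ := hTne
  have hHne : H ≠ ⊤ := by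
    intro h
    have hadj : H.Adj v t0 := by
      rw [h]
      exact hTadj t0 ht0
    exact hadj.2 (hDstar t0 ht0)
  set G2 : SimpleGraph V := G.deleteEdges Dset with hG2
  haveI : Fintype ↥H.verts := Fintype.ofFinite _
  have iso : H.coe ≃g G2 :=
    ⟨Equiv.Set.univ V, by
      intro a b
      show G2.Adj _ _ ↔ H.Adj ↑a ↑b
      rw [hG2, deleteEdges_adj]
      rfl⟩
  have h1 : triTau G2 ≤ triTau H.coe := triTau_le_iso iso.symm
  have h2 : triNu H.coe ≤ triNu G2 := triNu_le_iso iso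
  have h3 : triTau H.coe ≤ 2 * triNu H.coe := hmin H hHne
  -- G2 adjacency
  have hG2adj : ∀ x y, G2.Adj x y ↔ G.Adj x y ∧ s(x, y) ∉ Dset := by
    intro x y
    rw [hG2, deleteEdges_adj]
  ------------------------------------------------------------------
  -- ν bound : triNu G2 + M.card ≤ triNu G
  ------------------------------------------------------------------
  obtain ⟨S', hS'edt, hS'card⟩ := triNu_spec G2
  let tri : Sym2 V → Finset V :=
    Sym2.lift ⟨fun a b => {v, a, b}, fun a b => congrArg (insert v) (Finset.pair_comm a b)⟩
  set K : Finset (Finset V) := M.image tri with hK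
  have htri : ∀ a b : V, tri s(a, b) = {v, a, b} := fun a b => rfl
  -- pairs of a K-triangle are in Dset
  have hpairD : ∀ a b, a ∈ T → b ∈ T → s(a, b) ∈ M →
      ∀ x ∈ ({v, a, b} : Finset V), ∀ y ∈ ({v, a, b} : Finset V), x ≠ y → s(x, y) ∈ Dset := by
    intro a b ha hb hM x hx y hy hxy
    simp only [Finset.mem_insert, Finset.mem_singleton] at hx hy
    rcases hx with rfl | rfl | rfl <;> rcases hy with rfl | rfl | rfl <;>
      first
        | (exact absurd rfl hxy)
        | (exact hDstar _ ‹_›)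
        | (rw [Sym2.eq_swap]; exact hDstar _ ‹_›)
        | (exact hDM _ hM)
        | (rw [Sym2.eq_swap]; exact hDM _ hM)
  have hKprops : ∀ k ∈ K, ∃ a b, a ∈ T ∧ b ∈ T ∧ G.Adj a b ∧ s(a, b) ∈ M ∧ k = {v, a, b} := by
    intro k hk
    obtain ⟨e, he, rfl⟩ := Finset.mem_image.mp hk
    obtain ⟨a, b, ha, hb, hab, rfl⟩ := hMedge e he
    exact ⟨a, b, ha, hb, hab, he, rfl⟩
  have hKcliq : ∀ k ∈ K, G.IsNClique 3 k := by
    intro k hk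
    obtain ⟨a, b, ha, hb, hab, _, rfl⟩ := hKprops k hk
    exact SimpleGraph.is3Clique_triple_iff.mpr ⟨hTadj a ha, hTadj b hb, hab⟩
  -- no K-triangle is in S'
  have hKnotS' : ∀ k ∈ K, k ∉ S' := by
    intro k hk hkS
    obtain ⟨a, b, ha, hb, hab, hM, rfl⟩ := hKprops k hk
    have hcl := (hS'edt.1 _ hkS).1
    have hva : v ≠ a := fun h => hvT (h ▸ ha)
    have : G2.Adj v a := hcl (by simp) (by simp) hva
    exact ((hG2adj v a).mp this).2 (hDstar a ha)
  -- intersection of an S'-triangle with a K-triangle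
  have hSK : ∀ t ∈ S', ∀ k ∈ K, (t ∩ k).card ≤ 1 := by
    intro t ht k hk
    by_contra hcon
    push_neg at hcon
    obtain ⟨x, hx, y, hy, hxy⟩ := Finset.one_lt_card.mp hcon
    rw [Finset.mem_inter] at hx hy
    obtain ⟨a, b, ha, hb, hab, hM, rfl⟩ := hKprops k hk
    have hcl := (hS'edt.1 _ ht).1
    have : G2.Adj x y := hcl (Finset.mem_coe.mpr hx.1) (Finset.mem_coe.mpr hy.1) hxy
    exact ((hG2adj x y).mp this).2 (hpairD a b ha hb hM x hx.2 y hy.2 hxy)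
  -- intersection of two K-triangles
  have hKK : ∀ k₁ ∈ K, ∀ k₂ ∈ K, k₁ ≠ k₂ → (k₁ ∩ k₂).card ≤ 1 := by
    intro k₁ hk₁ k₂ hk₂ hne
    obtain ⟨a, b, ha, hb, hab, hM1, rfl⟩ := hKprops k₁ hk₁
    obtain ⟨cc, d, hc, hd, hcd, hM2, rfl⟩ := hKprops k₂ hk₂
    have heM : s(a, b) ≠ s(cc, d) := by
      intro h
      apply hne
      have := congrArg tri h
      rwa [htri, htri] at this
    have hdisj := hMdisj s(a, b) hM1 s(cc, d) hM2 heM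
    have hsub : ({v, a, b} : Finset V) ∩ {v, cc, d} ⊆ {v} := by
      intro x hx
      rw [Finset.mem_inter] at hx
      obtain ⟨hx1, hx2⟩ := hx
      simp only [Finset.mem_insert, Finset.mem_singleton] at hx1 hx2 ⊢
      rcases hx2 with h | h | h
      · exact h
      · rcases hx1 with h' | h' | h'
        · exact h'
        · exfalso
          apply hdisj a (Sym2.mem_mk_left a b)
          rw [show a = cc from h'.symm.trans h]
          exact Sym2.mem_mk_left cc d
        · exfalso
          apply hdisj b (Sym2.mem_mk_right a b)
          rw [show b = cc from h'.symm.trans h]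
          exact Sym2.mem_mk_left cc d
      · rcases hx1 with h' | h' | h'
        · exact h'
        · exfalso
          apply hdisj a (Sym2.mem_mk_left a b)
          rw [show a = d from h'.symm.trans h]
          exact Sym2.mem_mk_right cc d
        · exfalso
          apply hdisj b (Sym2.mem_mk_right a b)
          rw [show b = d from h'.symm.trans h]
          exact Sym2.mem_mk_right cc d
    calc (({v, a, b} : Finset V) ∩ {v, cc, d}).card ≤ ({v} : Finset V).card :=
          Finset.card_le_card hsub
      _ = 1 := Finset.card_singleton v
  have hedt : EdgeDisjointTriangles G (S' ∪ K) := by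
    constructor
    · intro t ht
      rcases Finset.mem_union.mp ht with h | h
      · exact (hS'edt.1 t h).mono (deleteEdges_le Dset)
      · exact hKcliq t h
    · intro t₁ ht₁ t₂ ht₂ hne
      rcases Finset.mem_union.mp ht₁ with h₁ | h₁ <;> rcases Finset.mem_union.mp ht₂ with h₂ | h₂
      · exact hS'edt.2 t₁ h₁ t₂ h₂ hne
      · exact hSK t₁ h₁ t₂ h₂
      · rw [Finset.inter_comm]; exact hSK t₂ h₂ t₁ h₁
      · exact hKK t₁ h₁ t₂ h₂ hne
  have hKcard : K.card = M.card := by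
    rw [hK]
    apply Finset.card_image_of_injOn
    intro e₁ he₁ e₂ he₂ hee
    by_contra hne
    obtain ⟨a, b, ha, hb, hab, rfl⟩ := hMedge e₁ he₁
    obtain ⟨cc, d, hc, hd, hcd, rfl⟩ := hMedge e₂ he₂
    have hdisj := hMdisj s(a, b) he₁ s(cc, d) he₂ hne
    have haK : a ∈ tri s(cc, d) := by
      rw [← hee, htri]
      simp
    rw [htri] at haK
    simp only [Finset.mem_insert, Finset.mem_singleton] at haK
    rcases haK with h | h | h
    · exact hvT (h ▸ ha)
    · apply hdisj a (Sym2.mem_mk_left a b)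
      rw [h]
      exact Sym2.mem_mk_left cc d
    · apply hdisj a (Sym2.mem_mk_left a b)
      rw [h]
      exact Sym2.mem_mk_right cc d
  have hdisjSK : Disjoint S' K := by
    rw [Finset.disjoint_right]
    intro k hk
    exact hKnotS' k hk
  have hnuG : triNu G2 + M.card ≤ triNu G := by
    have := le_triNu hedt
    rwa [Finset.card_union_of_disjoint hdisjSK, hS'card, hKcard] at this
  ------------------------------------------------------------------
  -- τ bound : triTau G ≤ triTau G2 + Z.card, Z.card ≤ 2 * M.card
  ------------------------------------------------------------------
  set Z : Finset (Sym2 V) := M ∪ X.image (fun x => s(v, x)) with hZdef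
  have hZcard : Z.card ≤ 2 * M.card := by
    have hc1 : Z.card ≤ M.card + (X.image (fun x => s(v, x))).card := Finset.card_union_le _ _
    have hc2 : (X.image (fun x => s(v, x))).card ≤ X.card := Finset.card_image_le
    omega
  have hMZ : ∀ e ∈ M, e ∈ Z := fun e he => Finset.mem_union_left _ he
  have hXZ : ∀ x ∈ X, s(v, x) ∈ Z := fun x hx =>
    Finset.mem_union_right _ (Finset.mem_image.mpr ⟨x, hx, rfl⟩)
  -- key triangle classification
  have key : ∀ x y w : V, G.Adj x y → G.Adj x w → G.Adj y w → s(x, y) ∈ Dset →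
      s(x, y) ∈ Z ∨ s(x, w) ∈ Z ∨ s(y, w) ∈ Z := by
    intro x y w hxy hxw hyw hD'
    rcases hD' with hM | ⟨u, huT, hequ⟩
    · exact Or.inl (hMZ _ hM)
    · rcases Sym2.eq_iff.mp hequ with ⟨rfl, rfl⟩ | ⟨rfl, rfl⟩
      · -- x = v, y = u
        have hwT : y ∈ T := huT
        have hwT2 : w ∈ T := hclos y hwT w hxw hyw
        rcases hcover y w hwT hwT2 hyw with hM | hX | hX
        · exact Or.inr (Or.inr (hMZ _ hM))
        · exact Or.inl (hXZ _ hX)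
        · exact Or.inr (Or.inl (hXZ _ hX))
      · -- x = u, y = v
        have hxT : x ∈ T := huT
        have hwT2 : w ∈ T := hclos x hxT w hyw hxw
        rcases hcover x w hxT hwT2 hxw with hM | hX | hX
        · exact Or.inr (Or.inl (hMZ _ hM))
        · refine Or.inl ?_
          rw [Sym2.eq_swap]
          exact hXZ _ hX
        · exact Or.inr (Or.inr (hXZ _ hX))
  obtain ⟨Y', hY'sub, hY'free, hY'card⟩ := triTau_spec G2
  have htauG : triTau G ≤ triTau G2 + Z.card := by
    have hsub : ↑(Y' ∪ Z) ⊆ G.edgeSet := by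
      rw [Finset.coe_union]
      apply Set.union_subset
      · refine hY'sub.trans ?_
        rw [hG2, edgeSet_deleteEdges]
        exact Set.diff_subset
      · intro e he
        rw [Finset.mem_coe, hZdef, Finset.mem_union] at he
        rcases he with hM | hX
        · obtain ⟨a, b, _, _, hab, rfl⟩ := hMedge e hM
          exact hab
        · obtain ⟨x, hx, rfl⟩ := Finset.mem_image.mp hX
          exact hTadj x (hXT x hx)
    have hfree : (G.deleteEdges ↑(Y' ∪ Z)).CliqueFree 3 := by
      intro t ht
      obtain ⟨a, b, cc, hab, hac, hbc, rfl⟩ := SimpleGraph.is3Clique_iff.mp ht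
      simp only [deleteEdges_adj, Finset.coe_union, Set.mem_union, Finset.mem_coe,
        not_or] at hab hac hbc
      obtain ⟨hab1, hab2, hab3⟩ := hab
      obtain ⟨hac1, hac2, hac3⟩ := hac
      obtain ⟨hbc1, hbc2, hbc3⟩ := hbc
      by_cases hD1 : s(a, b) ∈ Dset
      · rcases key a b cc hab1 hac1 hbc1 hD1 with h | h | h
        · exact hab3 h
        · exact hac3 h
        · exact hbc3 h
      by_cases hD2 : s(a, cc) ∈ Dset
      · rcases key a cc b hac1 hab1 hbc1.symm hD2 with h | h | h
        · exact hac3 h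
        · exact hab3 h
        · exact hbc3 (by rwa [Sym2.eq_swap] at h)
      by_cases hD3 : s(b, cc) ∈ Dset
      · rcases key b cc a hbc1 hab1.symm hac1.symm hD3 with h | h | h
        · exact hbc3 h
        · exact hab3 (by rwa [Sym2.eq_swap] at h)
        · exact hac3 (by rwa [Sym2.eq_swap] at h)
      · -- triangle of G2 avoiding Y'
        have : (G2.deleteEdges ↑Y').IsNClique 3 {a, b, cc} := by
          rw [SimpleGraph.is3Clique_triple_iff]
          refine ⟨?_, ?_, ?_⟩ <;> rw [deleteEdges_adj, hG2adj]
          · exact ⟨⟨hab1, hD1⟩, hab2⟩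
          · exact ⟨⟨hac1, hD2⟩, hac2⟩
          · exact ⟨⟨hbc1, hD3⟩, hbc2⟩
        exact hY'free _ this
    calc triTau G ≤ (Y' ∪ Z).card := triTau_le hsub hfree
      _ ≤ Y'.card + Z.card := Finset.card_union_le _ _
      _ = triTau G2 + Z.card := by rw [hY'card]
  omega
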